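/- arXiv:0901.2291 — 2 statements merged into one kernel-verified Lean document; each statement's English description precedes it below -/
import Mathlib

section
/- If A is a subgroup of the Baer-Specker group ℤ^ω that contains the subgroup ℤ^(ω) of finitely supported functions, and the quotient ℤ^ω/A is cotorsionfree, then A = ℤ^ω. -/
/-- An abelian group is cotorsionfree if it has no subgroup isomorphic to `ℚ`,
to `ℤ/pℤ` for a prime `p`, or to the additive group of the `p`-adic integers. -/
def Cotorsionfree (G : Type*) [AddCommGroup G] : Prop :=
  (¬ ∃ H : AddSubgroup G, Nonempty (H ≃+ ℚ)) ∧
  (∀ p : ℕ, p.Prime → ¬ ∃ H : AddSubgroup G, Nonempty (H ≃+ ZMod p)) ∧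
  (∀ (p : ℕ) [Fact p.Prime], ¬ ∃ H : AddSubgroup G, Nonempty (H ≃+ PadicInt p))

/-- The subgroup `ℤ^(ω)` of finitely supported functions in the Baer-Specker group `ℤ^ω`. -/
def finSuppSubgroup : AddSubgroup (ℕ → ℤ) where
  carrier := {x | (Function.support x).Finite}
  zero_mem' := by simp
  add_mem' := by
    intro a b ha hb
    exact Set.Finite.subset (ha.union hb) (Function.support_add a b)
  neg_mem' := by
    intro a ha
    simpa [Function.support_neg] using ha

/-!
Since `A` contains the finitely supported functions, every series `∑ n! gₙ` converges in
`Q = ℤ^ω/A` for the factorial topology: some `s` satisfies `s - ∑_{n<N} n! gₙ ∈ N! Q` for all `N`.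
If `Q` has torsion it contains some `ℤ/p`; if it is torsion-free with a nonzero element divisible
by every `n`, it contains `ℚ`. Otherwise, if `Q ≠ 0`, some `q₀ ∉ p Q` for a prime `p`, and
`α ↦ lim_N c_N(α) q₀`, where the integer `c_N(α)` is congruent to `α` modulo the `p`-part of `N!`
and divisible by its prime-to-`p` part, is an injective homomorphism `ℤ_[p] → Q`.
-/
open Finset Nat

theorem exists_addSubgroup_addEquiv_zmod_of_isOfFinAddOrder {G : Type*} [AddGroup G] {q : G}
    (hq : q ≠ 0) (hfin : IsOfFinAddOrder q) :
    ∃ p : ℕ, p.Prime ∧ ∃ H : AddSubgroup G, Nonempty (H ≃+ ZMod p) := by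
  have h1 : addOrderOf q ≠ 1 := mt AddMonoid.addOrderOf_eq_one_iff.1 hq
  set p := (addOrderOf q).minFac
  have hcard : Nat.card (AddSubgroup.zmultiples ((addOrderOf q / p) • q)) = p := by
    rw [Nat.card_zmultiples, addOrderOf_nsmul_addOrderOf_sub hfin.addOrderOf_pos.ne' (minFac_dvd _)]
  exact ⟨p, minFac_prime h1, _, ⟨hcard ▸ (zmodAddCyclicAddEquiv inferInstance).symm⟩⟩

section DivisibleElements

variable {Q : Type*} [AddCommGroup Q]

def IsDivisibleElement (q : Q) : Prop :=
  ∀ n : ℕ, n ≠ 0 → ∃ u, q = n • u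

theorem exists_addSubgroup_addEquiv_rat [IsAddTorsionFree Q] {d : Q} (hd : d ≠ 0)
    (hdiv : IsDivisibleElement d) : ∃ H : AddSubgroup Q, Nonempty (H ≃+ ℚ) := by
  have hF : ∀ r : ℚ, ∃ x : Q, (r.den : ℤ) • x = r.num • d := fun r ↦ by
    obtain ⟨u, hu⟩ := hdiv r.den r.den_nz
    exact ⟨r.num • u, by rw [smul_comm, natCast_zsmul, ← hu]⟩
  choose F hF using hF
  -- `F r` plays the role of `r • d`
  have hchar : ∀ (r : ℚ) (a b : ℤ), b ≠ 0 → r * b = a → b • F r = a • d := by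
    intro r a b hb hr
    have hcross : r.num * b = a * r.den := by
      rw [← Rat.num_div_den r] at hr
      field_simp at hr
      exact_mod_cast hr.trans (mul_comm _ _)
    apply zsmul_right_injective (Int.natCast_ne_zero.2 r.den_nz)
    dsimp only
    rw [smul_comm, hF, smul_smul, smul_smul, mul_comm, hcross, mul_comm]
  have hadd : ∀ r s, F (r + s) = F r + F s := by
    intro r s
    have hb : (r.den * s.den : ℤ) ≠ 0 := mul_ne_zero (by simp) (by simp)
    apply zsmul_right_injective hb
    dsimp only
    have hr : (r.den * s.den : ℤ) • F r = (r.num * s.den) • d := by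
      rw [mul_comm, mul_smul, hF, smul_smul, mul_comm]
    have hs : (r.den * s.den : ℤ) • F s = (s.num * r.den) • d := by
      rw [mul_smul, hF, smul_smul, mul_comm]
    rw [smul_add, hr, hs, ← add_smul]
    refine hchar _ _ _ hb ?_
    push_cast
    rw [← Rat.mul_den_eq_num r, ← Rat.mul_den_eq_num s]
    ring
  have hinj : Function.Injective (AddMonoidHom.mk' F hadd) := by
    refine (injective_iff_map_eq_zero _).2 fun r hr ↦ ?_
    have := hF r
    rw [show F r = 0 from hr, smul_zero, eq_comm,
      IsAddTorsionFree.zsmul_eq_zero_iff_left hd] at this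
    exact Rat.num_eq_zero.1 this
  exact ⟨_, ⟨(AddMonoidHom.ofInjective hinj).symm⟩⟩

theorem exists_prime_forall_ne_nsmul [Nontrivial Q]
    (hsep : ∀ q : Q, IsDivisibleElement q → q = 0) :
    ∃ p : ℕ, p.Prime ∧ ∃ q₀ : Q, ∀ u, q₀ ≠ p • u := by
  by_contra! h
  have hdiv (q : Q) : IsDivisibleElement q := by
    intro n
    induction n using Nat.recOnMul generalizing q with
    | zero => exact absurd rfl
    | one => exact fun _ ↦ ⟨q, (one_nsmul q).symm⟩
    | prime p hp => exact fun _ ↦ h p hp q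
    | mul a b ha hb =>
      intro hab
      obtain ⟨u, rfl⟩ := ha q (left_ne_zero_of_mul hab)
      obtain ⟨v, rfl⟩ := hb u (right_ne_zero_of_mul hab)
      exact ⟨v, (mul_nsmul' v a b).symm⟩
  obtain ⟨q, hq⟩ := exists_ne (0 : Q)
  exact hq (hsep q (hdiv q))

end DivisibleElements

section FactorialLimits

variable {Q : Type*} [AddCommGroup Q]

theorem exists_eq_nsmul_of_dvd {m n : ℕ} (hmn : m ∣ n) {q : Q} (hq : ∃ u, q = n • u) :
    ∃ u, q = m • u := by
  obtain ⟨u, rfl⟩ := hq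
  obtain ⟨k, rfl⟩ := hmn
  exact ⟨k • u, mul_nsmul' u m k⟩

def IsFactorialLimit (a : ℕ → Q) (s : Q) : Prop :=
  ∀ N, ∃ u, s - a N = N ! • u

variable (Q) in
def FactorialComplete : Prop :=
  ∀ g : ℕ → Q, ∃ s, IsFactorialLimit (fun N ↦ ∑ n ∈ range N, n ! • g n) s

theorem FactorialComplete.exists_isFactorialLimit (hQ : FactorialComplete Q) {a : ℕ → Q}
    (ha : ∀ N, ∃ u, a (N + 1) - a N = N ! • u) : ∃ s, IsFactorialLimit a s := by
  choose g hg using ha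
  obtain ⟨s, hs⟩ := hQ g
  refine ⟨s + a 0, fun N ↦ ?_⟩
  obtain ⟨u, hu⟩ := hs N
  refine ⟨u, ?_⟩
  dsimp only at hu
  rw [← hu, sum_congr rfl fun n _ ↦ (hg n).symm, sum_range_sub]
  abel

theorem IsFactorialLimit.add {a b : ℕ → Q} {s t : Q} (hs : IsFactorialLimit a s)
    (ht : IsFactorialLimit b t) : IsFactorialLimit (a + b) (s + t) := fun N ↦ by
  obtain ⟨u, hu⟩ := hs N
  obtain ⟨v, hv⟩ := ht N
  exact ⟨u + v, by rw [Pi.add_apply, add_sub_add_comm, hu, hv, smul_add]⟩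

theorem IsFactorialLimit.eq (hsep : ∀ q : Q, IsDivisibleElement q → q = 0)
    {a b : ℕ → Q} {s t : Q} (hs : IsFactorialLimit a s) (ht : IsFactorialLimit b t)
    (hab : ∀ N, ∃ u, a N - b N = N ! • u) : s = t := by
  refine sub_eq_zero.1 (hsep _ fun n hn ↦ exists_eq_nsmul_of_dvd (dvd_factorial
    (Nat.pos_of_ne_zero hn) le_rfl) ?_)
  obtain ⟨u, hu⟩ := hs n
  obtain ⟨v, hv⟩ := ht n
  obtain ⟨w, hw⟩ := hab n
  refine ⟨u - v + w, ?_⟩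
  rw [smul_add, smul_sub, ← hu, ← hv, ← hw]
  abel

end FactorialLimits

section BaerSpecker

variable {A : AddSubgroup (ℕ → ℤ)}

theorem exists_mk_eq_nsmul_of_dvd_of_le (hA : finSuppSubgroup ≤ A) {f : ℕ → ℤ} {m N : ℕ}
    (hf : ∀ k, N ≤ k → (m : ℤ) ∣ f k) :
    ∃ u : (ℕ → ℤ) ⧸ A, (f : (ℕ → ℤ) ⧸ A) = m • u := by
  refine ⟨↑(fun k ↦ f k / m), ?_⟩
  rw [← QuotientAddGroup.mk_nsmul, QuotientAddGroup.eq]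
  refine hA (Set.Finite.subset (Set.finite_Iio N) fun k hk ↦ ?_)
  by_contra hNk
  exact hk (by simp [Int.mul_ediv_cancel' (hf k (not_lt.1 hNk))])

theorem factorialComplete_quotient (hA : finSuppSubgroup ≤ A) :
    FactorialComplete ((ℕ → ℤ) ⧸ A) := by
  intro g
  choose G hG using fun n ↦ QuotientAddGroup.mk_surjective (g n)
  set S : ℕ → ℤ := fun k ↦ ∑ n ∈ range (k + 1), n ! • G n k
  refine ⟨S, fun N ↦ ?_⟩
  obtain ⟨u, hu⟩ := exists_mk_eq_nsmul_of_dvd_of_le hA (f := S - ∑ n ∈ range N, n ! • G n)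
    (m := N !) (N := N) fun k hk ↦ by
      simp only [S, Pi.sub_apply, Finset.sum_apply, Pi.smul_apply]
      rw [← sum_Ico_eq_sub _ (by omega)]
      refine dvd_sum fun n hn ↦ ?_
      rw [nsmul_eq_mul]
      exact (Int.natCast_dvd_natCast.2 (factorial_dvd_factorial (mem_Ico.1 hn).1)).mul_right _
  refine ⟨u, ?_⟩
  rw [← hu]
  simp [← hG]

end BaerSpecker

theorem Int.natCast_dvd_of_ordProj_dvd_of_ordCompl_dvd {p n : ℕ} (hp : p.Prime) (hn : n ≠ 0)
    {z : ℤ} (h₁ : (ordProj[p] n : ℤ) ∣ z) (h₂ : (ordCompl[p] n : ℤ) ∣ z) : (n : ℤ) ∣ z := by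
  have hcop : IsCoprime (ordProj[p] n : ℤ) (ordCompl[p] n : ℤ) :=
    Nat.isCoprime_iff_coprime.2 ((coprime_ordCompl hp hn).pow_left _)
  rw [← ordProj_mul_ordCompl_eq_self n p, Nat.cast_mul]
  exact hcop.mul_dvd h₁ h₂

namespace PadicInt

variable {p : ℕ} [hp : Fact p.Prime]

theorem eq_zero_of_forall_pow_dvd {x : ℤ_[p]} (h : ∀ k, (p : ℤ_[p]) ^ k ∣ x) : x = 0 := by
  by_contra hx
  have := (mem_span_pow_iff_le_valuation x hx _).1
    (Ideal.mem_span_singleton.2 (h (x.valuation + 1)))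
  omega

/-- Under `ℤ/N! ≅ ℤ/p^e × ℤ/m` (`N! = p^e m`, `p ∤ m`), `c` represents `(α mod p^e, 0)`: these
integers realise `ℤ_[p]` as a direct factor of `lim ℤ/N!`. -/
def IsFactorialApprox (α : ℤ_[p]) (N : ℕ) (c : ℤ) : Prop :=
  (p : ℤ_[p]) ^ (N !).factorization p ∣ (c : ℤ_[p]) - α ∧ (ordCompl[p] N ! : ℤ) ∣ c

theorem exists_isFactorialApprox (α : ℤ_[p]) (N : ℕ) : ∃ c, IsFactorialApprox α N c := by
  set e := (N !).factorization p
  obtain ⟨x, y, hxy⟩ : IsCoprime ((p : ℤ) ^ e) (ordCompl[p] N ! : ℤ) := by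
    exact_mod_cast Nat.isCoprime_iff_coprime.2
      ((coprime_ordCompl hp.out (factorial_ne_zero N)).pow_left _)
  refine ⟨appr α e * (y * ordCompl[p] N !), ?_, dvd_mul_of_dvd_right (dvd_mul_left _ _) _⟩
  have hc : ((appr α e * (y * ordCompl[p] N !) : ℤ) : ℤ_[p])
      = appr α e - appr α e * x * (p : ℤ_[p]) ^ e := by
    rw [← sub_eq_iff_eq_add'.2 hxy.symm]
    push_cast
    ring
  rw [hc, sub_right_comm]
  refine dvd_sub ?_ (dvd_mul_left _ _)
  rw [← dvd_neg, neg_sub]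
  exact Ideal.mem_span_singleton.1 (by exact_mod_cast appr_spec e α)

variable {α β : ℤ_[p]} {N : ℕ} {c d : ℤ}

theorem IsFactorialApprox.of_le (h : IsFactorialApprox α N c) {M : ℕ} (hMN : M ≤ N) :
    IsFactorialApprox α M c := by
  refine ⟨(pow_dvd_pow _ ?_).trans h.1, (Int.natCast_dvd_natCast.2 ?_).trans h.2⟩
  · exact (hp.out.pow_dvd_iff_le_factorization (factorial_ne_zero N)).1
      ((ordProj_dvd _ _).trans (factorial_dvd_factorial hMN))
  · exact ordCompl_dvd_ordCompl_of_dvd (factorial_dvd_factorial hMN) p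

theorem IsFactorialApprox.add (h : IsFactorialApprox α N c) (h' : IsFactorialApprox β N d) :
    IsFactorialApprox (α + β) N (c + d) := by
  refine ⟨?_, dvd_add h.2 h'.2⟩
  convert dvd_add h.1 h'.1 using 1
  push_cast
  ring

theorem IsFactorialApprox.factorial_dvd_sub (h : IsFactorialApprox α N c)
    (h' : IsFactorialApprox α N d) : (N ! : ℤ) ∣ c - d := by
  refine Int.natCast_dvd_of_ordProj_dvd_of_ordCompl_dvd hp.out (factorial_ne_zero N) ?_
    (dvd_sub h.2 h'.2)
  have := dvd_sub h.1 h'.1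
  rw [sub_sub_sub_cancel_right, ← Int.cast_sub, pow_p_dvd_int_iff] at this
  exact_mod_cast this

theorem IsFactorialApprox.pow_dvd (h : IsFactorialApprox α N c) {k : ℕ} (hk : p ^ k ∣ N !)
    (hc : (p : ℤ) ^ k ∣ c) : (p : ℤ_[p]) ^ k ∣ α := by
  have hke : (p : ℤ_[p]) ^ k ∣ (c : ℤ_[p]) - α :=
    (pow_dvd_pow _ ((hp.out.pow_dvd_iff_le_factorization (factorial_ne_zero N)).1 hk)).trans h.1
  simpa using dvd_sub ((pow_p_dvd_int_iff k c).2 hc) hke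

end PadicInt

section Embedding

variable {Q : Type*} [AddCommGroup Q] [IsAddTorsionFree Q]

theorem pow_dvd_of_zsmul_eq_nsmul {p : ℕ} (hp : p.Prime) {q₀ : Q} (hq₀ : ∀ u, q₀ ≠ p • u)
    {z : ℤ} {k : ℕ} (h : ∃ u, z • q₀ = p ^ k • u) : (p : ℤ) ^ k ∣ z := by
  induction k with
  | zero => exact one_dvd z
  | succ k ih =>
    obtain ⟨u, hu⟩ := h
    obtain ⟨a, rfl⟩ := ih ⟨p • u, by rw [hu, pow_succ, mul_nsmul']⟩
    refine pow_succ (p : ℤ) k ▸ mul_dvd_mul_left _ ?_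
    -- cancelling `p ^ k` gives `a • q₀ = p • u`; if `p ∤ a`, Bézout would put `q₀` in `p • Q`
    have ha : a • q₀ = (p : ℤ) • u := by
      refine zsmul_right_injective (pow_ne_zero k (Int.natCast_ne_zero.2 hp.ne_zero)) ?_
      dsimp only
      rw [smul_smul, smul_smul, hu, ← pow_succ, ← Nat.cast_pow, natCast_zsmul]
    by_contra hpa
    obtain ⟨x, y, hxy⟩ := (Nat.prime_iff_prime_int.1 hp).coprime_iff_not_dvd.2 hpa
    refine hq₀ (x • q₀ + y • u) ?_
    rw [← natCast_zsmul, smul_add, smul_comm _ y, ← ha, smul_smul, smul_smul, ← add_smul,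
      mul_comm (p : ℤ) x, hxy, one_smul]

theorem exists_injective_padicInt_addMonoidHom (hQ : FactorialComplete Q)
    (hsep : ∀ q : Q, IsDivisibleElement q → q = 0)
    {p : ℕ} [Fact p.Prime] {q₀ : Q} (hq₀ : ∀ u, q₀ ≠ p • u) :
    ∃ f : ℤ_[p] →+ Q, Function.Injective f := by
  choose c hc using PadicInt.exists_isFactorialApprox (p := p)
  have hlim : ∀ α, ∃ s, IsFactorialLimit (fun N ↦ c α N • q₀) s := fun α ↦
    hQ.exists_isFactorialLimit fun N ↦ by
      obtain ⟨k, hk⟩ := ((hc α (N + 1)).of_le N.le_succ).factorial_dvd_sub (hc α N)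
      exact ⟨k • q₀, by rw [← sub_smul, hk, mul_smul, natCast_zsmul]⟩
  choose Φ hΦ using hlim
  have hadd : ∀ α β, Φ (α + β) = Φ α + Φ β := fun α β ↦
    (hΦ (α + β)).eq hsep ((hΦ α).add (hΦ β)) fun N ↦ by
      obtain ⟨k, hk⟩ := (hc (α + β) N).factorial_dvd_sub ((hc α N).add (hc β N))
      exact ⟨k • q₀, by rw [Pi.add_apply, ← add_smul, ← sub_smul, hk, mul_smul, natCast_zsmul]⟩
  refine ⟨AddMonoidHom.mk' Φ hadd, (injective_iff_map_eq_zero _).2 fun α hα ↦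
    PadicInt.eq_zero_of_forall_pow_dvd fun k ↦ ?_⟩
  have hk : p ^ k ∣ (p ^ k)! := Nat.dvd_factorial (pow_pos (Fact.out : p.Prime).pos k) le_rfl
  refine (hc α (p ^ k)).pow_dvd hk (pow_dvd_of_zsmul_eq_nsmul Fact.out hq₀ ?_)
  obtain ⟨u, hu⟩ := hΦ α (p ^ k)
  rw [show Φ α = 0 from hα, zero_sub, neg_eq_iff_eq_neg, ← smul_neg] at hu
  exact exists_eq_nsmul_of_dvd hk ⟨-u, hu⟩

end Embedding

/-- if a subgroup `A` of `ℤ^ω` contains `ℤ^(ω)` and `ℤ^ω/A` is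
cotorsionfree, then `A = ℤ^ω`. -/
theorem statement4 (A : AddSubgroup (ℕ → ℤ)) (hA : finSuppSubgroup ≤ A)
    (hcf : Cotorsionfree ((ℕ → ℤ) ⧸ A)) : A = ⊤ := by
  obtain ⟨no_rat, no_zmod, no_padic⟩ := hcf
  have : IsAddTorsionFree ((ℕ → ℤ) ⧸ A) :=
    isAddTorsionFree_iff_not_isOfFinAddOrder.2 fun q hq hfin ↦
      let ⟨p, hp, hH⟩ := exists_addSubgroup_addEquiv_zmod_of_isOfFinAddOrder hq hfin
      no_zmod p hp hH
  have hsep : ∀ q : (ℕ → ℤ) ⧸ A, IsDivisibleElement q → q = 0 :=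
    fun q hq ↦ by_contra fun hq0 ↦ no_rat (exists_addSubgroup_addEquiv_rat hq0 hq)
  rw [← QuotientAddGroup.subsingleton_iff, ← not_nontrivial_iff_subsingleton]
  intro
  obtain ⟨p, hp, q₀, hq₀⟩ := exists_prime_forall_ne_nsmul hsep
  have : Fact p.Prime := ⟨hp⟩
  obtain ⟨f, hf⟩ := exists_injective_padicInt_addMonoidHom (factorialComplete_quotient hA) hsep hq₀
  exact no_padic p ⟨f.range, ⟨(AddMonoidHom.ofInjective hf).symm⟩⟩
end

section
/- Let U be a non-principal ultrafilter on ℕ and let K_U = {x ∈ ℤ^ω : {n ∈ ℕ : x(n) = 0} ∈ U}, a subgroup of ℤ^ω. Then the ultrapower ℤ^ω/K_U is never the union of an increasing chain ⟨B_α : α < δ⟩ of proper subgroups such that (ℤ^ω/K_U)/B_α is cotorsionfree for every α < δ. -/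
/-- For an ultrafilter `U` on `ℕ`, the subgroup `K_U = {x ∈ ℤ^ω : {n : x n = 0} ∈ U}`
of the Baer-Specker group; `ℤ^ω / K_U` is the ultrapower `ℤ^ω/U`. -/
def KU (U : Ultrafilter ℕ) : AddSubgroup (ℕ → ℤ) where
  carrier := {x | {n | x n = 0} ∈ U}
  zero_mem' := by
    have h : {n : ℕ | (0 : ℕ → ℤ) n = 0} = Set.univ := by ext n; simp
    show {n : ℕ | (0 : ℕ → ℤ) n = 0} ∈ U
    rw [h]
    exact Filter.univ_mem
  add_mem' := by
    intro a b ha hb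
    show {n : ℕ | (a + b) n = 0} ∈ U
    refine Filter.mem_of_superset (Filter.inter_mem ha hb) ?_
    intro n hn
    have h1 : a n = 0 := hn.1
    have h2 : b n = 0 := hn.2
    simp [Set.mem_setOf_eq, h1, h2]
  neg_mem' := by
    intro a ha
    show {n : ℕ | (-a) n = 0} ∈ U
    have h : {n : ℕ | (-a) n = 0} = {n | a n = 0} := by ext n; simp
    rw [h]; exact ha

open Filter

theorem Ultrafilter.le_cofinite_of_forall_singleton_notMem {α : Type*} {U : Ultrafilter α}
    (hU : ∀ a : α, ({a} : Set α) ∉ U) : (U : Filter α) ≤ cofinite := by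
  refine U.le_cofinite_or_eq_pure.resolve_right ?_
  rintro ⟨a, rfl⟩
  exact hU a (Ultrafilter.mem_pure.mpr rfl)

namespace KU

theorem mk_eq_mk_of_eventuallyEq {U : Ultrafilter ℕ} {w w' : ℕ → ℤ}
    (h : ∀ᶠ n in (U : Filter ℕ), w n = w' n) :
    (w : (ℕ → ℤ) ⧸ KU U) = w' := by
  refine QuotientAddGroup.eq.mpr (mem_of_superset h fun n hn => ?_)
  simp [show w n = w' n from hn]

theorem exists_zsmul_eq_of_eventually_dvd {U : Ultrafilter ℕ} {m : ℤ} {w : ℕ → ℤ}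
    (h : ∀ᶠ n in (U : Filter ℕ), m ∣ w n) :
    ∃ y : (ℕ → ℤ) ⧸ KU U, m • y = w :=
  ⟨(fun n => w n / m : ℕ → ℤ),
    mk_eq_mk_of_eventuallyEq (h.mono fun _ hn => Int.mul_ediv_cancel' hn)⟩

end KU

theorem exists_zsmul_eq_of_isCoprime {H : Type*} [AddCommGroup H] {s m : ℤ} (hsm : IsCoprime s m)
    {x y : H} (h : s • x = m • y) : ∃ z : H, m • z = x := by
  obtain ⟨u, v, huv⟩ := hsm
  refine ⟨u • y + v • x, ?_⟩
  calc m • (u • y + v • x) = u • (m • y) + (v * m) • x := by module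
    _ = (u * s + v * m) • x := by rw [← h]; module
    _ = x := by rw [huv, one_smul]

theorem zsmul_surjective_of_prime {H : Type*} [AddCommGroup H]
    (h : ∀ p : ℕ, p.Prime → Function.Surjective fun y : H => (p : ℤ) • y) :
    ∀ n : ℤ, n ≠ 0 → Function.Surjective fun y : H => n • y := by
  have hnat : ∀ n : ℕ, n ≠ 0 → Function.Surjective fun y : H => (n : ℤ) • y := by
    intro n
    induction n using Nat.recOnMul with
    | zero => exact fun h => absurd rfl h
    | one => exact fun _ x => ⟨x, by simp⟩
    | prime p hp => exact fun _ => h p hp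
    | mul a b ha hb =>
      intro hab
      have := (ha (left_ne_zero_of_mul hab)).comp (hb (right_ne_zero_of_mul hab))
      simpa [Function.comp_def, mul_smul] using this
  intro n hn
  rcases Int.natAbs_eq n with hn' | hn'
  · rw [hn']; exact hnat _ (by simpa using hn)
  · intro x
    obtain ⟨y, hy⟩ := hnat n.natAbs (by simpa using hn) x
    exact ⟨-y, by simp only at hy ⊢; rw [hn', neg_smul_neg, hy]⟩

theorem exists_addEquiv_zmod_addOrderOf {H : Type*} [AddCommGroup H] (x : H) :
    ∃ S : AddSubgroup H, Nonempty (S ≃+ ZMod (addOrderOf x)) := by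
  let f : ZMod (addOrderOf x) →+ H :=
    ZMod.lift _ ⟨zmultiplesHom H x, by simp [addOrderOf_nsmul_eq_zero]⟩
  have hf : Function.Injective f := (ZMod.lift_injective _).mpr fun m hm => by
    rwa [ZMod.intCast_zmod_eq_zero_iff_dvd, addOrderOf_dvd_iff_zsmul_eq_zero]
  exact ⟨f.range, ⟨(AddMonoidHom.ofInjective hf).symm⟩⟩

section TorsionFree

variable {H : Type*} [AddCommGroup H] [IsAddTorsionFree H]

theorem eq_of_zsmul_eq_of_mul_eq {x z z' : H} {d d' n n' : ℤ} (hd : d ≠ 0) (hd' : d' ≠ 0)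
    (hz : d • z = n • x) (hz' : d' • z' = n' • x) (hnd : n * d' = n' * d) : z = z' := by
  refine zsmul_right_injective (mul_ne_zero hd hd') ?_
  calc (d * d') • z = (n * d') • x := by rw [mul_comm, mul_smul, hz, smul_smul, mul_comm]
    _ = (n' * d) • x := by rw [hnd]
    _ = (d * d') • z' := by rw [mul_comm, mul_smul, ← hz', smul_smul]

theorem exists_addEquiv_rat_of_forall_dvd {x : H} (hx0 : x ≠ 0)
    (hx : ∀ n : ℤ, n ≠ 0 → ∃ y : H, n • y = x) : ∃ S : AddSubgroup H, Nonempty (S ≃+ ℚ) := by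
  choose y hy using fun n : ℕ => hx (n.succ : ℤ) (by positivity)
  -- `y n` is an `(n + 1)`-th root of `x`, so `F q` is "`q` times `x`".
  let F : ℚ → H := fun q => q.num • y (q.den - 1)
  have hF : ∀ q : ℚ, (q.den : ℤ) • F q = q.num • x := fun q => by
    have := hy (q.den - 1)
    rw [Nat.succ_eq_add_one, Nat.sub_add_cancel q.pos] at this
    rw [smul_comm, this]
  have hden : ∀ q : ℚ, (q.den : ℤ) ≠ 0 := fun q => by exact_mod_cast q.den_nz
  let Φ : ℚ →+ H := AddMonoidHom.mk' F fun q r => by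
    refine eq_of_zsmul_eq_of_mul_eq (hden _) (mul_ne_zero (hden q) (hden r)) (hF _)
      (n' := q.num * r.den + r.num * q.den) ?_ (by rw [← mul_assoc]; exact Rat.add_num_den' q r)
    calc ((q.den : ℤ) * r.den) • (F q + F r)
        = (r.den : ℤ) • ((q.den : ℤ) • F q) + (q.den : ℤ) • ((r.den : ℤ) • F r) := by module
      _ = _ := by rw [hF, hF]; module
  have hΦ : Function.Injective Φ := (injective_iff_map_eq_zero Φ).mpr fun q hq => by
    have := hF q
    rw [show F q = 0 from hq, smul_zero, eq_comm,
      IsAddTorsionFree.zsmul_eq_zero_iff_left hx0] at this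
    exact Rat.num_eq_zero.mp this
  exact ⟨Φ.range, ⟨(AddMonoidHom.ofInjective hΦ).symm⟩⟩

end TorsionFree

namespace Cotorsionfree

variable {G : Type*} [AddCommGroup G]

theorem isAddTorsionFree (h : Cotorsionfree G) : IsAddTorsionFree G := by
  refine IsAddTorsionFree.of_not_isOfFinAddOrder fun x hx0 hx => ?_
  have hp : (addOrderOf x).minFac.Prime := Nat.minFac_prime (by simpa using hx0)
  have hord : addOrderOf ((addOrderOf x / (addOrderOf x).minFac) • x) = (addOrderOf x).minFac :=
    addOrderOf_nsmul_addOrderOf_sub hx.addOrderOf_pos.ne' (Nat.minFac_dvd _)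
  obtain ⟨S, hS⟩ := exists_addEquiv_zmod_addOrderOf ((addOrderOf x / (addOrderOf x).minFac) • x)
  exact h.2.1 _ hp ⟨S, hord ▸ hS⟩

theorem eq_zero_of_forall_dvd (h : Cotorsionfree G) {x : G}
    (hx : ∀ n : ℤ, n ≠ 0 → ∃ y : G, n • y = x) : x = 0 := by
  have := h.isAddTorsionFree
  by_contra hx0
  exact h.1 (exists_addEquiv_rat_of_forall_dvd hx0 hx)

end Cotorsionfree

theorem Nat.dvd_pow_mul_ordCompl_factorial {p m n : ℕ} (hm : m ≠ 0) (hmn : m ≤ n) :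
    m ∣ p ^ n * ordCompl[p] n.factorial := by
  rw [← Nat.ordProj_mul_ordCompl_eq_self m p]
  exact mul_dvd_mul (pow_dvd_pow p ((m.factorization_lt p hm).le.trans hmn))
    (Nat.ordCompl_dvd_ordCompl_of_dvd (Nat.dvd_factorial (Nat.pos_of_ne_zero hm) hmn) p)

namespace PadicInt

variable {p : ℕ} [hp : Fact p.Prime]

theorem coprime_ordCompl_factorial (n : ℕ) : p.Coprime (ordCompl[p] n.factorial) :=
  Nat.coprime_ordCompl hp.out n.factorial_ne_zero

theorem exists_int_dvd_and_pow_dvd_sub {c : ℕ} (hc : p.Coprime c) (a : ℤ_[p]) (n : ℕ) :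
    ∃ r : ℤ, (c : ℤ) ∣ r ∧ (p : ℤ_[p]) ^ n ∣ a - r := by
  obtain ⟨u, v, huv⟩ : IsCoprime (c : ℤ) ((p : ℤ) ^ n) := by
    exact_mod_cast Nat.isCoprime_iff_coprime.mpr (hc.symm.pow_right n)
  obtain ⟨t, ht⟩ := Ideal.mem_span_singleton'.mp (appr_spec n a)
  refine ⟨c * (u * a.appr n), dvd_mul_right _ _, t + v * a.appr n, ?_⟩
  have huv' : (u : ℤ_[p]) * c + v * (p : ℤ_[p]) ^ n = 1 := by exact_mod_cast congrArg Int.cast huv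
  push_cast
  linear_combination -ht - (a.appr n : ℤ_[p]) * huv'

/-- The divisibility by the prime-to-`p` part of `n!` makes the defect `r a + r b - r (a + b)`
divisible by `p ^ n * ordCompl[p] n!`, hence by every `m ≤ n`. -/
noncomputable def factorialAppr (p : ℕ) [Fact p.Prime] (a : ℤ_[p]) (n : ℕ) : ℤ :=
  (exists_int_dvd_and_pow_dvd_sub (coprime_ordCompl_factorial n) a n).choose

theorem ordCompl_factorial_dvd_factorialAppr (a : ℤ_[p]) (n : ℕ) :
    ((ordCompl[p] n.factorial : ℕ) : ℤ) ∣ factorialAppr p a n :=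
  (exists_int_dvd_and_pow_dvd_sub (coprime_ordCompl_factorial n) a n).choose_spec.1

theorem pow_dvd_sub_factorialAppr (a : ℤ_[p]) (n : ℕ) :
    (p : ℤ_[p]) ^ n ∣ a - factorialAppr p a n :=
  (exists_int_dvd_and_pow_dvd_sub (coprime_ordCompl_factorial n) a n).choose_spec.2

theorem eventually_dvd_factorialAppr_add_sub (a b : ℤ_[p]) {m : ℤ} (hm : m ≠ 0) :
    ∀ᶠ n in atTop,
      m ∣ factorialAppr p a n + factorialAppr p b n - factorialAppr p (a + b) n := by
  filter_upwards [eventually_ge_atTop m.natAbs] with n hn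
  rw [← Int.natAbs_dvd]
  refine (Int.natCast_dvd_natCast.mpr
    (Nat.dvd_pow_mul_ordCompl_factorial (p := p) (Int.natAbs_ne_zero.mpr hm) hn)).trans ?_
  rw [Nat.cast_mul, Nat.cast_pow]
  refine IsCoprime.mul_dvd ?_ ?_ ?_
  · exact Nat.isCoprime_iff_coprime.mpr ((coprime_ordCompl_factorial n).pow_left n)
  · rw [← pow_p_dvd_int_iff]
    convert (pow_dvd_sub_factorialAppr (a + b) n).sub
      ((pow_dvd_sub_factorialAppr a n).add (pow_dvd_sub_factorialAppr b n)) using 1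
    push_cast
    ring
  · exact ((ordCompl_factorial_dvd_factorialAppr a n).add
      (ordCompl_factorial_dvd_factorialAppr b n)).sub (ordCompl_factorial_dvd_factorialAppr _ n)

theorem eventually_dvd_factorialAppr_sub (a : ℤ_[p]) :
    ∀ᶠ n in atTop, (p : ℤ) ∣ factorialAppr p a n - factorialAppr p a 1 := by
  filter_upwards [eventually_ge_atTop 1] with n hn
  rw [← pow_one (p : ℤ), ← pow_p_dvd_int_iff]
  convert (pow_dvd_sub_factorialAppr a 1).sub
    ((pow_dvd_pow _ hn).trans (pow_dvd_sub_factorialAppr a n)) using 1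
  push_cast
  ring

theorem isCoprime_factorialAppr_one (u : ℤ_[p]ˣ) : IsCoprime (factorialAppr p u 1) p := by
  refine IsCoprime.symm ((Nat.prime_iff_prime_int.mp hp.out).irreducible.coprime_iff_not_dvd.mpr
    fun h => prime_p.not_isUnit (isUnit_of_dvd_unit ?_ u.isUnit))
  have h' := (pow_p_dvd_int_iff 1 _).mpr (by simpa using h)
  rw [pow_one] at h'
  have hu := (pow_one (p : ℤ_[p]) ▸ pow_dvd_sub_factorialAppr (u : ℤ_[p]) 1).add h'
  rwa [sub_add_cancel] at hu

end PadicInt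

section Ultrapower

/-- Stands in for the scalar multiple `a • [g]`, which the ultrapower does not carry. -/
noncomputable def padicSMul (U : Ultrafilter ℕ) (p : ℕ) [Fact p.Prime] (a : ℤ_[p]) (g : ℕ → ℤ) :
    (ℕ → ℤ) ⧸ KU U :=
  (fun n => PadicInt.factorialAppr p a n * g n : ℕ → ℤ)

variable {U : Ultrafilter ℕ}

theorem exists_zsmul_eq_mk_mul (hU : (U : Filter ℕ) ≤ atTop) {m : ℤ} {s : ℕ → ℤ}
    (h : ∀ᶠ n in atTop, m ∣ s n) (g : ℕ → ℤ) :
    ∃ y : (ℕ → ℤ) ⧸ KU U, m • y = (fun n => s n * g n : ℕ → ℤ) :=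
  KU.exists_zsmul_eq_of_eventually_dvd (hU (h.mono fun n hn => hn.mul_right (g n)))

variable {p : ℕ} [Fact p.Prime]

theorem exists_zsmul_eq_padicSMul_add_sub (hU : (U : Filter ℕ) ≤ atTop) (a b : ℤ_[p])
    (g : ℕ → ℤ) {m : ℤ} (hm : m ≠ 0) :
    ∃ y : (ℕ → ℤ) ⧸ KU U,
      m • y = padicSMul U p a g + padicSMul U p b g - padicSMul U p (a + b) g := by
  obtain ⟨y, hy⟩ :=
    exists_zsmul_eq_mk_mul hU (PadicInt.eventually_dvd_factorialAppr_add_sub a b hm) g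
  refine ⟨y, hy.trans ?_⟩
  simp only [padicSMul, ← QuotientAddGroup.mk_add, ← QuotientAddGroup.mk_sub]
  congr 1
  funext n
  simp only [Pi.add_apply, Pi.sub_apply]
  ring

theorem exists_zsmul_eq_padicSMul_sub (hU : (U : Filter ℕ) ≤ atTop) (a : ℤ_[p]) (g : ℕ → ℤ) :
    ∃ y : (ℕ → ℤ) ⧸ KU U,
      (p : ℤ) • y = padicSMul U p a g - PadicInt.factorialAppr p a 1 • (g : (ℕ → ℤ) ⧸ KU U) := by
  obtain ⟨y, hy⟩ := exists_zsmul_eq_mk_mul hU (PadicInt.eventually_dvd_factorialAppr_sub a) g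
  refine ⟨y, hy.trans ?_⟩
  simp only [padicSMul, ← QuotientAddGroup.mk_zsmul, ← QuotientAddGroup.mk_sub]
  congr 1
  funext n
  simp only [Pi.sub_apply, Pi.smul_apply, smul_eq_mul]
  ring

theorem exists_addEquiv_padicInt_of_not_dvd (hU : (U : Filter ℕ) ≤ atTop)
    {H : Type*} [AddCommGroup H] [IsAddTorsionFree H]
    (hred : ∀ x : H, (∀ n : ℤ, n ≠ 0 → ∃ y : H, n • y = x) → x = 0)
    (φ : (ℕ → ℤ) ⧸ KU U →+ H) (g : ℕ → ℤ) (hg : ¬ ∃ z : H, (p : ℤ) • z = φ g) :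
    ∃ S : AddSubgroup H, Nonempty (S ≃+ ℤ_[p]) := by
  let Ψ : ℤ_[p] →+ H := AddMonoidHom.mk' (fun a => φ (padicSMul U p a g)) fun a b => by
    refine (sub_eq_zero.mp (hred _ fun m hm => ?_)).symm
    obtain ⟨y, hy⟩ := exists_zsmul_eq_padicSMul_add_sub hU a b g hm
    exact ⟨φ y, by rw [← map_zsmul, hy, map_sub, map_add]⟩
  have hΨ : Function.Injective Ψ := (injective_iff_map_eq_zero Ψ).mpr fun a ha => by
    by_contra ha0
    set u := PadicInt.unitCoeff ha0
    have hu : φ (padicSMul U p u g) = 0 := by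
      rw [PadicInt.unitCoeff_spec ha0, mul_comm, ← Nat.cast_pow, ← nsmul_eq_mul, map_nsmul] at ha
      exact (nsmul_eq_zero_iff_right (pow_ne_zero _ (Fact.out : p.Prime).ne_zero)).mp ha
    obtain ⟨y, hy⟩ := exists_zsmul_eq_padicSMul_sub hU (u : ℤ_[p]) g
    refine hg (exists_zsmul_eq_of_isCoprime (PadicInt.isCoprime_factorialAppr_one u) (y := -φ y) ?_)
    rw [smul_neg, ← map_zsmul φ (p : ℤ) y, hy, map_sub, hu, zero_sub, neg_neg, map_zsmul]
  exact ⟨Ψ.range, ⟨(AddMonoidHom.ofInjective hΨ).symm⟩⟩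

theorem not_cotorsionfree_quotient (hU : (U : Filter ℕ) ≤ atTop)
    {B : AddSubgroup ((ℕ → ℤ) ⧸ KU U)} (hB : B ≠ ⊤) :
    ¬ Cotorsionfree (((ℕ → ℤ) ⧸ KU U) ⧸ B) := by
  intro hcf
  have := hcf.isAddTorsionFree
  obtain ⟨p, hp, h, hh⟩ :
      ∃ p : ℕ, p.Prime ∧ ∃ h : ((ℕ → ℤ) ⧸ KU U) ⧸ B, ¬ ∃ z, (p : ℤ) • z = h := by
    by_contra! hall
    refine hB ((AddSubgroup.eq_top_iff' B).mpr fun x => (QuotientAddGroup.eq_zero_iff x).mp ?_)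
    exact hcf.eq_zero_of_forall_dvd fun n hn =>
      zsmul_surjective_of_prime (fun p hp x => hall p hp x) n hn _
  obtain ⟨x, rfl⟩ := QuotientAddGroup.mk_surjective h
  obtain ⟨w, rfl⟩ := QuotientAddGroup.mk_surjective x
  have : Fact p.Prime := ⟨hp⟩
  exact hcf.2.2 p (exists_addEquiv_padicInt_of_not_dvd hU (fun _ => hcf.eq_zero_of_forall_dvd)
    (QuotientAddGroup.mk' B) w hh)

end Ultrapower

/-- for a non-principal ultrafilter `U` on `ℕ`, the ultrapower `ℤ^ω/U`
is never the union of an increasing chain `⟨B_α : α < δ⟩` of proper subgroups with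
all quotients `(ℤ^ω/U)/B_α` cotorsionfree. -/
theorem statement7 (U : Ultrafilter ℕ) (hU : ∀ a : ℕ, ({a} : Set ℕ) ∉ U) :
    ¬ ∃ (δ : Ordinal) (B : Ordinal → AddSubgroup ((ℕ → ℤ) ⧸ KU U)),
      (∀ α β : Ordinal, α ≤ β → β < δ → B α ≤ B β) ∧
      (∀ α < δ, B α ≠ ⊤) ∧
      (∀ α < δ, Cotorsionfree (((ℕ → ℤ) ⧸ KU U) ⧸ B α)) ∧
      (⋃ α ∈ Set.Iio δ, (B α : Set ((ℕ → ℤ) ⧸ KU U))) = Set.univ := by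
  rintro ⟨δ, B, -, hproper, hcf, hunion⟩
  obtain ⟨α, hα, -⟩ := Set.mem_iUnion₂.mp (hunion ▸ Set.mem_univ (0 : (ℕ → ℤ) ⧸ KU U))
  exact not_cotorsionfree_quotient
    ((Ultrafilter.le_cofinite_of_forall_singleton_notMem hU).trans Nat.cofinite_eq_atTop.le)
    (hproper α hα) (hcf α hα)
end
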